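/- arXiv:1704.04051 — 2 statements merged into one kernel-verified Lean document; each statement's English description precedes it below -/
import Mathlib

section
/- Let m be an odd squarefree positive integer and p a prime not dividing m. Write Φ_{mp}(x) = Σ_{i≥0} f_{m,p,i}(x) x^{ip} with deg f_{m,p,i} < p, and write f_{m,p,i}(x) = Σ_{j≥0} f_{m,p,i,j}(x) x^{jm} with deg f_{m,p,i,j} < m. Let r = p mod m and q = ⌊p/m⌋. Then for 0 ≤ i ≤ φ(m)-1 and 0 ≤ j ≤ q-1, f_{m,p,i,j}(x) = -rem( x^{m - (ir mod m)} · Ψ_m(x) · T_{i+1}Φ_m(x^r), x^m - 1 ), where T_{i+1}Φ_m denotes the truncation of Φ_m to degree < i+1 and Ψ_m(x) = (x^m-1)/Φ_m(x). -/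
open Polynomial

/-- The `m`-th inverse cyclotomic polynomial `Ψ_m = (X^m - 1)/Φ_m`. -/
noncomputable def invCyclotomic (m : ℕ) : ℤ[X] := (X ^ m - 1) /ₘ cyclotomic m ℤ

/-- The block `f_{m,p,i,j}` of `Φ_{mp}`: the `j`-th base-`x^m` digit of the `i`-th
base-`x^p` digit of `Φ_{mp}`. -/
noncomputable def cycBlock (m p i j : ℕ) : ℤ[X] :=
  ∑ k ∈ Finset.range m,
    if j * m + k < p then C ((cyclotomic (m * p) ℤ).coeff (i * p + j * m + k)) * X ^ k else 0

open Finset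

/-!
Write `Φ_{mp}(x) (x^m - 1) = Φ_m(x^p) Ψ_m(x)`. Whenever `F (x^m - 1) = E`, splitting
`F = L + x^n W + x^{n+m} H` with `deg L < n`, `deg W < m` shows that `E mod x^{n+m}` is
`L (x^m - 1) - x^n W`, so `x^n W ≡ -(E mod x^{n+m})` modulo `x^m - 1`. For `n = ip + jm` with
`jm + m ≤ p` the digit `W` is the block `f_{m,p,i,j}`, and since `deg Ψ_m < m` the terms `x^{tp}`,
`t > i`, of `Φ_m(x^p)` do not reach below `x^{n+m}`, so `E mod x^{n+m} = Ψ_m(x) T_{i+1}Φ_m(x^p)`.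
Modulo `x^m - 1` one may replace `x^p` by `x^r`, and `x^{m - (ir mod m)}` inverts `x^n`; as the
block has degree `< m` it equals its remainder.
-/

namespace Polynomial

variable {R : Type*} [CommRing R]

theorem coeff_divByMonic_X_pow [Nontrivial R] (f : R[X]) (n k : ℕ) :
    (f /ₘ X ^ n).coeff k = f.coeff (n + k) := by
  have hmod : (f %ₘ X ^ n).coeff (n + k) = 0 := by
    refine coeff_eq_zero_of_degree_lt ((degree_modByMonic_lt f (monic_X_pow n)).trans_le ?_)
    rw [degree_X_pow]
    exact_mod_cast Nat.le_add_right n k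
  conv_rhs => rw [← modByMonic_add_div f (X ^ n)]
  rw [coeff_add, hmod, coeff_X_pow_mul', if_pos (Nat.le_add_right n k), Nat.add_sub_cancel_left,
    zero_add]

theorem coeff_modByMonic_X_pow [Nontrivial R] (f : R[X]) (m k : ℕ) :
    (f %ₘ X ^ m).coeff k = if k < m then f.coeff k else 0 := by
  split_ifs with hk
  · conv_rhs => rw [← modByMonic_add_div f (X ^ m)]
    rw [coeff_add, coeff_X_pow_mul', if_neg (by omega), add_zero]
  · refine coeff_eq_zero_of_degree_lt ((degree_modByMonic_lt f (monic_X_pow m)).trans_le ?_)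
    rw [degree_X_pow]
    exact_mod_cast not_lt.mp hk

theorem divByMonic_X_pow_modByMonic_X_pow [Nontrivial R] (f : R[X]) (n m : ℕ) :
    (f /ₘ X ^ n) %ₘ X ^ m = ∑ k ∈ range m, C (f.coeff (n + k)) * X ^ k := by
  ext k
  simp only [coeff_modByMonic_X_pow, coeff_divByMonic_X_pow, finsetSum_coeff, coeff_C_mul_X_pow,
    sum_ite_eq, mem_range]

theorem X_pow_sub_one_dvd_X_pow_sub_X_pow {m a b : ℕ} (h : a ≡ b [MOD m]) :
    (X ^ m - 1 : R[X]) ∣ X ^ a - X ^ b := by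
  wlog hab : b ≤ a generalizing a b
  · exact dvd_sub_comm.mp (this h.symm (by omega))
  obtain ⟨c, rfl⟩ : ∃ c, a = b + m * c :=
    ⟨(a - b) / m, by rw [Nat.mul_div_cancel' ((Nat.modEq_iff_dvd' hab).mp h.symm)]; omega⟩
  rw [pow_add, pow_mul, ← mul_sub_one]
  exact (sub_one_dvd_pow_sub_one _ c).mul_left _

theorem X_pow_sub_one_dvd_expand_sub_expand (f : R[X]) {m a b : ℕ} (h : a ≡ b [MOD m]) :
    (X ^ m - 1 : R[X]) ∣ expand R a f - expand R b f := by
  refine (X_pow_sub_one_dvd_X_pow_sub_X_pow h).trans ?_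
  simpa only [eval_map, coe_expand] using sub_dvd_eval_sub (X ^ a) (X ^ b) (f.map C)

theorem X_pow_mul_dvd_expand_sub_expand_modByMonic (f : R[X]) (p s : ℕ) :
    (X ^ (s * p) : R[X]) ∣ expand R p f - expand R p (f %ₘ X ^ s) := by
  nth_rewrite 1 [← modByMonic_add_div f (X ^ s)]
  rw [map_add, add_sub_cancel_left, map_mul, map_pow, expand_X, ← pow_mul, mul_comm p s]
  exact dvd_mul_right _ _

theorem X_pow_sub_one_dvd_X_pow_mul_add_modByMonic [Nontrivial R] (F : R[X]) (n m : ℕ) :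
    (X ^ m - 1 : R[X]) ∣ X ^ n * ((F /ₘ X ^ n) %ₘ X ^ m) + (F * (X ^ m - 1)) %ₘ X ^ (n + m) := by
  set L := F %ₘ X ^ n
  set W := (F /ₘ X ^ n) %ₘ X ^ m
  have hF : F = L + X ^ n * (W + X ^ m * ((F /ₘ X ^ n) /ₘ X ^ m)) := by
    rw [modByMonic_add_div, modByMonic_add_div]
  have hL : degree L < n := by simpa using degree_modByMonic_lt F (monic_X_pow n)
  have hW : degree W < m := by simpa using degree_modByMonic_lt (F /ₘ X ^ n) (monic_X_pow m)
  have hdeg : degree (L * X ^ m - L - X ^ n * W) < degree (X ^ (n + m) : R[X]) := by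
    rw [degree_X_pow]
    refine (degree_sub_le _ _).trans_lt (max_lt ((degree_sub_le _ _).trans_lt (max_lt ?_ ?_)) ?_)
    · rw [degree_mul_X_pow, Nat.cast_add]
      exact WithBot.add_lt_add_right (WithBot.natCast_ne_bot m) hL
    · exact hL.trans_le (by exact_mod_cast Nat.le_add_right n m)
    · rw [mul_comm, degree_mul_X_pow, Nat.cast_add, add_comm (n : WithBot ℕ)]
      exact WithBot.add_lt_add_right (WithBot.natCast_ne_bot n) hW
  have htrunc : (F * (X ^ m - 1)) %ₘ X ^ (n + m) = L * X ^ m - L - X ^ n * W :=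
    (div_modByMonic_unique (W + (F /ₘ X ^ n) /ₘ X ^ m * (X ^ m - 1)) _ (monic_X_pow _)
      ⟨by linear_combination -(X ^ m - 1 : R[X]) * hF, hdeg⟩).2
  rw [htrunc]
  exact ⟨L, by ring⟩

theorem natDegree_modByMonic_X_pow_le [Nontrivial R] (f : R[X]) (s : ℕ) :
    (f %ₘ X ^ (s + 1)).natDegree ≤ s := by
  have hne : (X ^ (s + 1) : R[X]) ≠ 1 := fun h => by simpa using congrArg natDegree h
  simpa [Nat.lt_succ_iff] using natDegree_modByMonic_lt f (monic_X_pow (s + 1)) hne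

theorem expand_mul_modByMonic_X_pow [Nontrivial R] (f g : R[X]) {p i N : ℕ}
    (hlo : i * p + g.natDegree < N) (hhi : N ≤ (i + 1) * p) :
    (expand R p f * g) %ₘ X ^ N = expand R p (f %ₘ X ^ (i + 1)) * g := by
  have hdvd : (X ^ N : R[X]) ∣ expand R p f * g - expand R p (f %ₘ X ^ (i + 1)) * g := by
    rw [← sub_mul]
    exact ((pow_dvd_pow X hhi).trans (X_pow_mul_dvd_expand_sub_expand_modByMonic f p _)).mul_right g
  have hdeg : (expand R p (f %ₘ X ^ (i + 1)) * g).natDegree < N := by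
    refine (natDegree_mul_le).trans_lt (lt_of_le_of_lt ?_ hlo)
    rw [natDegree_expand]
    gcongr
    exact natDegree_modByMonic_X_pow_le f i
  rw [modByMonic_eq_of_dvd_sub (monic_X_pow N) hdvd, (modByMonic_eq_self_iff (monic_X_pow N)).2]
  rw [degree_X_pow]
  exact degree_le_natDegree.trans_lt (by exact_mod_cast hdeg)

end Polynomial

theorem cyclotomic_mul_invCyclotomic (m : ℕ) : cyclotomic m ℤ * invCyclotomic m = X ^ m - 1 := by
  have h := modByMonic_add_div (X ^ m - 1 : ℤ[X]) (cyclotomic m ℤ)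
  rwa [(modByMonic_eq_zero_iff_dvd (cyclotomic.monic m ℤ)).2 (cyclotomic.dvd_X_pow_sub_one m ℤ),
    zero_add] at h

theorem natDegree_invCyclotomic_lt {m : ℕ} (hm : 0 < m) : (invCyclotomic m).natDegree < m := by
  have hΨ : invCyclotomic m ≠ 0 := by
    intro h
    apply X_pow_sub_C_ne_zero hm (1 : ℤ)
    rw [C_1, ← cyclotomic_mul_invCyclotomic, h, mul_zero]
  have h := congrArg natDegree (cyclotomic_mul_invCyclotomic m)
  rw [natDegree_mul (cyclotomic_ne_zero m ℤ) hΨ, natDegree_cyclotomic, ← C_1,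
    natDegree_X_pow_sub_C] at h
  have := Nat.totient_pos.2 hm
  omega

theorem cyclotomic_mul_X_pow_sub_one_eq_expand_mul_invCyclotomic {m p : ℕ} (hp : p.Prime)
    (hpm : ¬ p ∣ m) :
    cyclotomic (m * p) ℤ * (X ^ m - 1) = expand ℤ p (cyclotomic m ℤ) * invCyclotomic m := by
  rw [cyclotomic_expand_eq_cyclotomic_mul hp hpm, mul_assoc, cyclotomic_mul_invCyclotomic]

theorem cycBlock_eq_divByMonic_modByMonic {m p j : ℕ} (i : ℕ) (hj : (j + 1) * m ≤ p) :
    cycBlock m p i j = (cyclotomic (m * p) ℤ /ₘ X ^ (i * p + j * m)) %ₘ X ^ m := by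
  rw [divByMonic_X_pow_modByMonic_X_pow, cycBlock]
  refine sum_congr rfl fun k hk => ?_
  rw [add_mul, one_mul] at hj
  rw [if_pos (by rw [mem_range] at hk; omega)]

theorem X_pow_sub_one_dvd_X_pow_mul_cycBlock_add {m p j : ℕ} (hm : 0 < m) (hp : p.Prime)
    (hpm : ¬ p ∣ m) (i : ℕ) (hj : (j + 1) * m ≤ p) :
    (X ^ m - 1 : ℤ[X]) ∣ X ^ (i * p + j * m) * cycBlock m p i j +
      expand ℤ p (cyclotomic m ℤ %ₘ X ^ (i + 1)) * invCyclotomic m := by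
  have hlo : i * p + (invCyclotomic m).natDegree < i * p + j * m + m := by
    have := natDegree_invCyclotomic_lt hm
    omega
  have hhi : i * p + j * m + m ≤ (i + 1) * p := by
    rw [add_mul, one_mul] at hj ⊢
    omega
  rw [cycBlock_eq_divByMonic_modByMonic i hj]
  simpa only [cyclotomic_mul_X_pow_sub_one_eq_expand_mul_invCyclotomic hp hpm,
    expand_mul_modByMonic_X_pow _ _ hlo hhi] using
    X_pow_sub_one_dvd_X_pow_mul_add_modByMonic (cyclotomic (m * p) ℤ) (i * p + j * m) m

theorem Nat.sub_mod_add_modEq_zero {m a b : ℕ} (hm : 0 < m) (h : a ≡ b [MOD m]) :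
    m - b % m + a ≡ 0 [MOD m] :=
  calc m - b % m + a ≡ m - b % m + b % m [MOD m] := (h.trans (Nat.mod_modEq b m).symm).add_left _
    _ = m := Nat.sub_add_cancel (Nat.mod_lt b hm).le
    _ ≡ 0 [MOD m] := Nat.modEq_zero_iff_dvd.2 dvd_rfl

theorem cycBlock_eq_explicit_general (m p : ℕ) (hm : 0 < m) (hp : p.Prime) (hpm : ¬ p ∣ m) :
    ∀ i < Nat.totient m, ∀ j < p / m,
      cycBlock m p i j =
        -((X ^ (m - (i * (p % m)) % m) *
            (invCyclotomic m *
              Polynomial.expand ℤ (p % m) ((cyclotomic m ℤ) %ₘ X ^ (i + 1)))) %ₘ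
          (X ^ m - 1)) := by
  intro i _ j hj
  have hjm : (j + 1) * m ≤ p := (Nat.le_div_iff_mul_le hm).1 hj
  set T := cyclotomic m ℤ %ₘ X ^ (i + 1)
  set d := m - i * (p % m) % m
  have hM : (X ^ m - 1 : ℤ[X]).Monic := by simpa using monic_X_pow_sub_C (1 : ℤ) hm.ne'
  have hdeg : (cycBlock m p i j).degree < (X ^ m - 1 : ℤ[X]).degree := by
    rw [cycBlock_eq_divByMonic_modByMonic i hjm, ← C_1, degree_X_pow_sub_C hm,
      ← degree_X_pow (R := ℤ)]
    exact degree_modByMonic_lt _ (monic_X_pow m)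
  have hn : i * p + j * m ≡ i * (p % m) [MOD m] := by
    simpa using ((Nat.mod_modEq p m).symm.mul_left i).add
      (Nat.modEq_zero_iff_dvd.2 (dvd_mul_left m j))
  obtain ⟨a, ha⟩ := X_pow_sub_one_dvd_X_pow_mul_cycBlock_add hm hp hpm i hjm
  obtain ⟨b, hb⟩ := X_pow_sub_one_dvd_expand_sub_expand T (Nat.mod_modEq p m).symm
  obtain ⟨c, hc⟩ := X_pow_sub_one_dvd_X_pow_sub_X_pow (R := ℤ) (b := 0)
    (Nat.sub_mod_add_modEq_zero hm hn)
  rw [← neg_modByMonic, ← (modByMonic_eq_self_iff hM).2 hdeg]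
  refine modByMonic_eq_of_dvd_sub hM
    ⟨X ^ d * a - X ^ d * invCyclotomic m * b - c * cycBlock m p i j, ?_⟩
  linear_combination X ^ d * ha - X ^ d * invCyclotomic m * hb - cycBlock m p i j * hc

/-- Explicit formula: for `0 ≤ i ≤ φ(m)-1` and `0 ≤ j ≤ q-1`,
`f_{m,p,i,j} = -rem(x^{m-(ir mod m)} Ψ_m T_{i+1}Φ_m(x^r), x^m - 1)`. -/
theorem cycBlock_eq_explicit (m p : ℕ) (hm : 0 < m) (hodd : Odd m) (hsf : Squarefree m)
    (hp : p.Prime) (hpm : ¬ p ∣ m) :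
    ∀ i < Nat.totient m, ∀ j < p / m,
      cycBlock m p i j =
        -((X ^ (m - (i * (p % m)) % m) *
            (invCyclotomic m *
              Polynomial.expand ℤ (p % m) ((cyclotomic m ℤ) %ₘ X ^ (i + 1)))) %ₘ
          (X ^ m - 1)) :=
  cycBlock_eq_explicit_general m p hm hp hpm
end

section
/- Let m be an odd squarefree positive integer and p a prime not dividing m, p = qm + r with 0 < r < m. Then every coefficient of Φ_{mp} of the form [x^{ip + jm + k}]Φ_{mp} with 0 ≤ i ≤ φ(m)-1, 0 ≤ j ≤ q-1, 0 ≤ k < m, is independent of j; that is, [x^{ip + jm + k}]Φ_{mp} = [x^{ip + k}]Φ_{mp} for all such i, j, k. -/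
open Polynomial

/-!
Write `X ^ m - 1 = Φ_m * g` with `deg g < m`. Since `Φ_m(X ^ p) = Φ_{mp} * Φ_m` for a prime
`p ∤ m`, we get `Φ_{mp} * (X ^ m - 1) = Φ_m(X ^ p) * g`. Every monomial on the right has exponent
`p * a + b` with `b ≤ deg g < m`, so the coefficient of `X ^ n` on the left vanishes whenever
`n % p ≥ m`, i.e. `c_n = c_{n - m}` there. Starting from `n = i * p + k` and adding `m` at most
`p / m - 1` times keeps `n % p ≥ m`.
-/

namespace Polynomial

theorem coeff_mul_X_pow_sub_one_add {R : Type*} [Ring R] (f : R[X]) (m n : ℕ) :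
    (f * (X ^ m - 1)).coeff (n + m) = f.coeff n - f.coeff (n + m) := by
  rw [mul_sub, mul_one, coeff_sub, coeff_mul_X_pow]

theorem coeff_expand_mul_eq_zero {R : Type*} [CommSemiring R] {p n : ℕ} (hp : 0 < p)
    (f g : R[X]) (hg : g.natDegree < n % p) : (expand R p f * g).coeff n = 0 := by
  rw [coeff_mul]
  refine Finset.sum_eq_zero fun ⟨a, b⟩ hab => ?_
  rw [Finset.HasAntidiagonal.mem_antidiagonal] at hab
  rw [coeff_expand hp]
  split_ifs with hpa
  · obtain ⟨c, rfl⟩ := hpa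
    have hb : n % p = b % p := by rw [← hab, Nat.mul_add_mod]
    rw [coeff_eq_zero_of_natDegree_lt (hg.trans_le (hb ▸ Nat.mod_le b p)), mul_zero]
  · rw [zero_mul]

theorem exists_cyclotomic_mul_eq_X_pow_sub_one {m : ℕ} (hm : 0 < m) (R : Type*) [CommRing R]
    [Nontrivial R] : ∃ g : R[X], g.natDegree < m ∧ cyclotomic m R * g = X ^ m - 1 := by
  set g := ∏ i ∈ m.properDivisors, cyclotomic i R
  have hprod : cyclotomic m R * g = X ^ m - 1 := by
    rw [← prod_cyclotomic_eq_X_pow_sub_one hm, ← Nat.cons_self_properDivisors hm.ne',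
      Finset.prod_cons]
  refine ⟨g, ?_, hprod⟩
  have hg_monic : g.Monic := monic_prod_of_monic _ _ fun i _ ↦ cyclotomic.monic i R
  have hdeg := congrArg natDegree hprod
  rw [(cyclotomic.monic m R).natDegree_mul hg_monic,
    natDegree_cyclotomic, ← C_1, natDegree_X_pow_sub_C] at hdeg
  have := Nat.totient_pos.mpr hm
  omega

theorem cyclotomic_mul_prime_coeff_add_eq {m p : ℕ} (hm : 0 < m) (hp : p.Prime) (hpm : ¬p ∣ m)
    (R : Type*) [CommRing R] [Nontrivial R] {n : ℕ} (hn : m ≤ (n + m) % p) :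
    (cyclotomic (m * p) R).coeff (n + m) = (cyclotomic (m * p) R).coeff n := by
  obtain ⟨g, hg_deg, hg⟩ := exists_cyclotomic_mul_eq_X_pow_sub_one hm R
  have hkey : cyclotomic (m * p) R * (X ^ m - 1) = expand R p (cyclotomic m R) * g := by
    rw [← hg, cyclotomic_expand_eq_cyclotomic_mul hp hpm, mul_assoc]
  have hvanish := coeff_expand_mul_eq_zero hp.pos (cyclotomic m R) g
    (hg_deg.trans_le hn)
  rw [← hkey, coeff_mul_X_pow_sub_one_add, sub_eq_zero] at hvanish
  exact hvanish.symm

end Polynomial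

theorem Nat.apply_mul_add_mul_add_eq_of_apply_add_eq {α : Type*} (c : ℕ → α) {m p : ℕ}
    (hstep : ∀ n, m ≤ (n + m) % p → c (n + m) = c n) (i : ℕ) {j k : ℕ} (hjk : j * m + k < p) :
    c (i * p + j * m + k) = c (i * p + k) := by
  induction j with
  | zero => simp
  | succ j ih =>
    have hmod : (i * p + j * m + k + m) % p = (j + 1) * m + k := by
      rw [show i * p + j * m + k + m = p * i + ((j + 1) * m + k) by ring, Nat.mul_add_mod,
        Nat.mod_eq_of_lt hjk]
    rw [show i * p + (j + 1) * m + k = i * p + j * m + k + m by ring,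
      hstep _ (by rw [hmod]; nlinarith), ih (by nlinarith)]

theorem cyclotomic_coeff_repetition_general (m p : ℕ) (hm : 0 < m)
    (hp : p.Prime) (hpm : ¬ p ∣ m) :
    ∀ i < Nat.totient m, ∀ j < p / m, ∀ k < m,
      (cyclotomic (m * p) ℤ).coeff (i * p + j * m + k) =
        (cyclotomic (m * p) ℤ).coeff (i * p + k) := by
  intro i _ j hj k hk
  have hjk : j * m + k < p := by
    have : (j + 1) * m ≤ p := (Nat.le_div_iff_mul_le hm).mp hj
    nlinarith
  exact Nat.apply_mul_add_mul_add_eq_of_apply_add_eq _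
    (fun _ hn ↦ cyclotomic_mul_prime_coeff_add_eq hm hp hpm ℤ hn) i hjk

/-- Repetition at the coefficient level: the coefficient of `x^{ip+jm+k}` in `Φ_{mp}` is
independent of `j` for `0 ≤ i ≤ φ(m)-1`, `0 ≤ j ≤ q-1`, `0 ≤ k < m`. -/
theorem cyclotomic_coeff_repetition (m p : ℕ) (hm : 0 < m) (hodd : Odd m)
    (hsf : Squarefree m) (hp : p.Prime) (hpm : ¬ p ∣ m) :
    ∀ i < Nat.totient m, ∀ j < p / m, ∀ k < m,
      (cyclotomic (m * p) ℤ).coeff (i * p + j * m + k) =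
        (cyclotomic (m * p) ℤ).coeff (i * p + k) :=
  cyclotomic_coeff_repetition_general m p hm hp hpm
end
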